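/- Let ρ_τ(s) = α_H T |s−τ|^{2H−2} for τ ∈ [0,T] and ρ_{n,j}(s) = α_H n ∫_{I_j} |s−s'|^{2H−2} ds' where I_j = ((j−1)T/n, jT/n] and α_H = H(2H−1), H ∈ (1/2,1). Then (1) sup_τ ‖ρ_τ‖_{L¹([0,T])} and sup_{n,j} ‖ρ_{n,j}‖_{L¹([0,T])} are finite; (2) lim_{n→∞} sup_{τ∈[0,T]} ‖ρ_{n,j_n(τ)} − ρ_τ‖_{L¹([0,T])} = 0, where j_n(τ) is the index with τ ∈ I_{j_n(τ)}. -/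

import Mathlib

open Filter MeasureTheory Set

namespace Stmt17Aux


lemma abs_rpow_ii_base {r : ℝ} (hr : -1 < r) (M : ℝ) (hM : 0 ≤ M) :
    IntervalIntegrable (fun x : ℝ => |x| ^ r) volume (-M) M := by
  have h2 : IntervalIntegrable (fun x : ℝ => |x| ^ r) volume 0 M := by
    rw [intervalIntegrable_iff_integrableOn_Ioc_of_le hM]
    exact ((intervalIntegral.intervalIntegrable_rpow' hr (a := 0) (b := M)).1.congr_fun
      (fun x hx => by rw [abs_of_pos hx.1]) measurableSet_Ioc)
  have h3 : IntervalIntegrable (fun x : ℝ => |x| ^ r) volume (-M) 0 := by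
    have := ((IntervalIntegrable.iff_comp_neg).mp h2)
    simpa [abs_neg] using this.symm
  exact h3.trans h2

lemma abs_rpow_ii {r : ℝ} (hr : -1 < r) (c a b : ℝ) :
    IntervalIntegrable (fun s => |s - c| ^ r) volume a b := by
  set M := |a - c| + |b - c| with hMdef
  have hM : 0 ≤ M := by positivity
  have h1' : IntervalIntegrable (fun s : ℝ => |s - c| ^ r) volume (-M + c) (M + c) :=
    (abs_rpow_ii_base hr M hM).comp_sub_right c
  apply h1'.mono_set
  apply Set.uIcc_subset_uIcc
  · have h2 : -M + c ≤ M + c := by linarith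
    rw [Set.uIcc_of_le h2]
    have := le_abs_self (a - c); have := neg_abs_le (a - c)
    have := abs_nonneg (b - c)
    constructor <;> linarith
  · have h2 : -M + c ≤ M + c := by linarith
    rw [Set.uIcc_of_le h2]
    have := le_abs_self (b - c); have := neg_abs_le (b - c)
    have := abs_nonneg (a - c)
    constructor <;> linarith

lemma int_left {r : ℝ} (hr : -1 < r) {a b c : ℝ} (hca : c ≤ a) (hab : a ≤ b) :
    ∫ s in Set.Ioc a b, |s - c| ^ r = ((b - c) ^ (r+1) - (a - c) ^ (r+1)) / (r+1) := by
  rw [← intervalIntegral.integral_of_le hab]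
  rw [intervalIntegral.integral_congr (g := fun s => (s - c) ^ r) ?_]
  · rw [intervalIntegral.integral_comp_sub_right (fun x : ℝ => x ^ r) c]
    rw [integral_rpow (Or.inl hr)]
  · intro x hx
    rw [Set.uIcc_of_le hab] at hx
    simp only
    rw [abs_of_nonneg (by linarith [hx.1])]

lemma int_right {r : ℝ} (hr : -1 < r) {a b c : ℝ} (hab : a ≤ b) (hbc : b ≤ c) :
    ∫ s in Set.Ioc a b, |s - c| ^ r = ((c - a) ^ (r+1) - (c - b) ^ (r+1)) / (r+1) := by
  rw [← intervalIntegral.integral_of_le hab]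
  rw [intervalIntegral.integral_congr (g := fun s => (c - s) ^ r) ?_]
  · rw [intervalIntegral.integral_comp_sub_left (fun x : ℝ => x ^ r) c]
    rw [integral_rpow (Or.inl hr)]
  · intro x hx
    rw [Set.uIcc_of_le hab] at hx
    simp only
    rw [abs_sub_comm, abs_of_nonneg (by linarith [hx.2])]

lemma int_in {r : ℝ} (hr : -1 < r) (hr0 : r < 0) {a b c : ℝ} (hac : a ≤ c) (hcb : c ≤ b) :
    ∫ s in Set.Ioc a b, |s - c| ^ r = ((c - a) ^ (r+1) + (b - c) ^ (r+1)) / (r+1) := by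
  have hp : r + 1 ≠ 0 := by linarith
  rw [← intervalIntegral.integral_of_le (hac.trans hcb),
    ← intervalIntegral.integral_add_adjacent_intervals (abs_rpow_ii hr c a c) (abs_rpow_ii hr c c b),
    intervalIntegral.integral_of_le hac, intervalIntegral.integral_of_le hcb,
    int_right hr hac le_rfl, int_left hr le_rfl hcb]
  rw [sub_self, Real.zero_rpow hp]
  ring

lemma ae_ne (x : ℝ) : ∀ᵐ s : ℝ, s ≠ x := by
  rw [MeasureTheory.ae_iff]
  simp only [not_not, Set.setOf_eq_eq_singleton]
  exact Real.volume_singleton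

lemma ion {r : ℝ} (hr : -1 < r) (c : ℝ) {a b : ℝ} (hab : a ≤ b) :
    IntegrableOn (fun s => |s - c| ^ r) (Set.Ioc a b) volume :=
  (intervalIntegrable_iff_integrableOn_Ioc_of_le hab).mp (abs_rpow_ii hr c a b)

lemma ion' {r : ℝ} (hr : -1 < r) (c : ℝ) {a b : ℝ} (hab : a ≤ b) :
    IntegrableOn (fun s' => |c - s'| ^ r) (Set.Ioc a b) volume := by
  have : (fun s' => |c - s'| ^ r) = fun s' => |s' - c| ^ r := by
    funext s'; rw [abs_sub_comm]
  rw [this]; exact ion hr c hab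

lemma int_in_le {r : ℝ} (hr : -1 < r) (hr0 : r < 0) {T c : ℝ}
    (hc : c ∈ Set.Icc (0:ℝ) T) :
    (∫ s in Set.Ioc (0:ℝ) T, |s - c| ^ r) ≤ 2 * T ^ (r+1) / (r+1) := by
  have hp : (0:ℝ) < r + 1 := by linarith
  rw [int_in hr hr0 hc.1 hc.2, sub_zero]
  have b1 : c ^ (r+1) ≤ T ^ (r+1) := Real.rpow_le_rpow hc.1 hc.2 hp.le
  have b2 : (T - c) ^ (r+1) ≤ T ^ (r+1) :=
    Real.rpow_le_rpow (by linarith [hc.2]) (by linarith [hc.1]) hp.le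
  rw [div_le_div_iff₀ hp hp]
  nlinarith [Real.rpow_nonneg (show (0:ℝ) ≤ T by linarith [hc.1, hc.2]) (r+1)]

lemma keyB {r : ℝ} (hr : -1 < r) (hr0 : r < 0) {T x y : ℝ}
    (hxy : x ≤ y) (hx : 0 ≤ x) (hy : y ≤ T) :
    (∫ s in Set.Ioc (0:ℝ) T, |(|s - y| ^ r - |s - x| ^ r)|) ≤ 4 * (y - x) ^ (r+1) / (r+1) := by
  have hp : (0:ℝ) < r + 1 := by linarith
  set m := (x + y) / 2 with hm
  have hxm : x ≤ m := by rw [hm]; linarith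
  have hmy : m ≤ y := by rw [hm]; linarith
  have h0m : 0 ≤ m := le_trans hx hxm
  have hmT : m ≤ T := le_trans hmy hy
  have hIx1 := ion hr x h0m
  have hIy1 := ion hr y h0m
  have hIx2 := ion hr x hmT
  have hIy2 := ion hr y hmT
  have hg1 : IntegrableOn (fun s => |(|s - y| ^ r - |s - x| ^ r)|) (Set.Ioc (0:ℝ) m) volume :=
    (hIy1.sub hIx1).abs
  have hg2 : IntegrableOn (fun s => |(|s - y| ^ r - |s - x| ^ r)|) (Set.Ioc m T) volume :=
    (hIy2.sub hIx2).abs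
  have hsplit : (∫ s in Set.Ioc (0:ℝ) T, |(|s - y| ^ r - |s - x| ^ r)|)
      = (∫ s in Set.Ioc (0:ℝ) m, |(|s - y| ^ r - |s - x| ^ r)|)
        + ∫ s in Set.Ioc m T, |(|s - y| ^ r - |s - x| ^ r)| := by
    rw [← Set.Ioc_union_Ioc_eq_Ioc h0m hmT,
      setIntegral_union (Set.Ioc_disjoint_Ioc_of_le le_rfl) measurableSet_Ioc hg1 hg2]
  have h1 : (∫ s in Set.Ioc (0:ℝ) m, |(|s - y| ^ r - |s - x| ^ r)|)
      = (∫ s in Set.Ioc (0:ℝ) m, |s - x| ^ r) - ∫ s in Set.Ioc (0:ℝ) m, |s - y| ^ r := by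
    rw [← integral_sub hIx1 hIy1]
    apply setIntegral_congr_ae measurableSet_Ioc
    filter_upwards [ae_ne x] with s hsx hs
    have hd : |s - x| ≤ |s - y| := by
      have h2 : |s - y| = y - s := by
        rw [abs_sub_comm, abs_of_nonneg (by linarith [hs.2])]
      rw [h2, abs_le]
      constructor <;> [linarith; linarith [hs.2]]
    have h3 : (0:ℝ) < |s - x| := abs_pos.2 (sub_ne_zero.2 hsx)
    have h4 : |s - y| ^ r ≤ |s - x| ^ r := Real.rpow_le_rpow_of_nonpos h3 hd hr0.le
    rw [abs_of_nonpos (by linarith), neg_sub]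
  have h2 : (∫ s in Set.Ioc m T, |(|s - y| ^ r - |s - x| ^ r)|)
      = (∫ s in Set.Ioc m T, |s - y| ^ r) - ∫ s in Set.Ioc m T, |s - x| ^ r := by
    rw [← integral_sub hIy2 hIx2]
    apply setIntegral_congr_ae measurableSet_Ioc
    filter_upwards [ae_ne y] with s hsy hs
    have hd : |s - y| ≤ |s - x| := by
      have h2' : |s - x| = s - x := abs_of_nonneg (by linarith [hs.1])
      rw [h2', abs_le]
      constructor <;> [linarith [hs.1]; linarith]
    have h3 : (0:ℝ) < |s - y| := abs_pos.2 (sub_ne_zero.2 hsy)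
    have h4 : |s - x| ^ r ≤ |s - y| ^ r := Real.rpow_le_rpow_of_nonpos h3 hd hr0.le
    rw [abs_of_nonneg (by linarith)]
  rw [hsplit, h1, h2, int_in hr hr0 hx hxm, int_right hr h0m hmy,
    int_in hr hr0 hmy hy, int_left hr hxm hmT]
  have e1 : m - x = (y - x) / 2 := by rw [hm]; ring
  have e2 : y - m = (y - x) / 2 := by rw [hm]; ring
  simp only [e1, e2, sub_zero]
  have b1 : x ^ (r+1) ≤ y ^ (r+1) := Real.rpow_le_rpow hx hxy hp.le
  have b2 : (T - y) ^ (r+1) ≤ (T - x) ^ (r+1) :=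
    Real.rpow_le_rpow (by linarith) (by linarith) hp.le
  have b3 : ((y - x)/2) ^ (r+1) ≤ (y - x) ^ (r+1) :=
    Real.rpow_le_rpow (by linarith) (by linarith) hp.le
  have hfinal : (x ^ (r+1) + ((y - x)/2) ^ (r+1)) / (r+1)
        - (y ^ (r+1) - ((y - x)/2) ^ (r+1)) / (r+1)
        + ((((y - x)/2) ^ (r+1) + (T - y) ^ (r+1)) / (r+1)
          - ((T - x) ^ (r+1) - ((y - x)/2) ^ (r+1)) / (r+1))
      = (x ^ (r+1) + ((y - x)/2) ^ (r+1) - (y ^ (r+1) - ((y - x)/2) ^ (r+1))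
        + (((y - x)/2) ^ (r+1) + (T - y) ^ (r+1) - ((T - x) ^ (r+1) - ((y - x)/2) ^ (r+1))))
          / (r+1) := by ring
  rw [hfinal]
  gcongr
  linarith

lemma keyB' {r : ℝ} (hr : -1 < r) (hr0 : r < 0) {T x y : ℝ}
    (hx : x ∈ Set.Icc (0:ℝ) T) (hy : y ∈ Set.Icc (0:ℝ) T) :
    (∫ s in Set.Ioc (0:ℝ) T, |(|s - x| ^ r - |s - y| ^ r)|) ≤ 4 * |x - y| ^ (r+1) / (r+1) := by
  rcases le_total x y with h | h
  · have hcomm : ∀ s : ℝ, |(|s - x| ^ r - |s - y| ^ r)| = |(|s - y| ^ r - |s - x| ^ r)| :=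
      fun s => abs_sub_comm _ _
    simp only [hcomm]
    rw [abs_sub_comm x y, abs_of_nonneg (by linarith : (0:ℝ) ≤ y - x)]
    exact keyB hr hr0 h hx.1 hy.2
  · rw [abs_of_nonneg (by linarith : (0:ℝ) ≤ x - y)]
    exact keyB hr hr0 h hy.1 hx.2

/-- Generic swap bound. -/
lemma swap_bound {T a b K : ℝ} (hab : a ≤ b) (hK : 0 ≤ K)
    (G : ℝ → ℝ → ℝ)
    (hGmeas : Measurable (fun p : ℝ × ℝ => G p.1 p.2))
    (hGnn : ∀ s s', 0 ≤ G s s')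
    (hGint1 : ∀ s, IntegrableOn (fun s' => G s s') (Set.Ioc a b) volume)
    (hGint2 : ∀ s' ∈ Set.Ioc a b, IntegrableOn (fun s => G s s') (Set.Ioc (0:ℝ) T) volume)
    (hGle : ∀ s' ∈ Set.Ioc a b, (∫ s in Set.Ioc (0:ℝ) T, G s s') ≤ K)
    (q : ℝ → ℝ) (hqnn : ∀ s, 0 ≤ q s)
    (hqm : AEStronglyMeasurable q (volume.restrict (Set.Ioc (0:ℝ) T)))
    (hqle : ∀ s, q s ≤ ∫ s' in Set.Ioc a b, G s s') :
    (∫ s in Set.Ioc (0:ℝ) T, q s) ≤ (b - a) * K := by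
  have heq : (∫ s in Set.Ioc (0:ℝ) T, q s)
      = (∫⁻ s in Set.Ioc (0:ℝ) T, ENNReal.ofReal (q s)).toReal := by
    rw [integral_eq_lintegral_of_nonneg_ae (ae_of_all _ hqnn) hqm]
  rw [heq]
  apply ENNReal.toReal_le_of_le_ofReal (mul_nonneg (by linarith) hK)
  have hstep1 : (∫⁻ s in Set.Ioc (0:ℝ) T, ENNReal.ofReal (q s))
      ≤ ∫⁻ s in Set.Ioc (0:ℝ) T, ∫⁻ s' in Set.Ioc a b, ENNReal.ofReal (G s s') := by
    apply lintegral_mono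
    intro s
    calc ENNReal.ofReal (q s) ≤ ENNReal.ofReal (∫ s' in Set.Ioc a b, G s s') :=
          ENNReal.ofReal_le_ofReal (hqle s)
      _ = ∫⁻ s' in Set.Ioc a b, ENNReal.ofReal (G s s') :=
          ofReal_integral_eq_lintegral_ofReal (hGint1 s) (ae_of_all _ (hGnn s))
  refine hstep1.trans ?_
  have hm : Measurable (Function.uncurry fun s s' => ENNReal.ofReal (G s s')) :=
    hGmeas.ennreal_ofReal
  rw [lintegral_lintegral_swap hm.aemeasurable]
  have hinner : (∫⁻ s' in Set.Ioc a b, ∫⁻ s in Set.Ioc (0:ℝ) T, ENNReal.ofReal (G s s'))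
      ≤ ∫⁻ _ in Set.Ioc a b, ENNReal.ofReal K := by
    apply lintegral_mono_ae
    rw [ae_restrict_iff' measurableSet_Ioc]
    apply ae_of_all
    intro s' hs'
    rw [← ofReal_integral_eq_lintegral_ofReal (hGint2 s' hs')
      (ae_of_all _ (fun s => hGnn s s'))]
    exact ENNReal.ofReal_le_ofReal (hGle s' hs')
  refine le_trans hinner ?_
  rw [setLIntegral_const, Real.volume_Ioc, ← ENNReal.ofReal_mul hK,
    mul_comm K (b - a)]

lemma jIdx_facts {T : ℝ} (hT : 0 < T) {n : ℕ} (hn : 1 ≤ n) {τ : ℝ}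
    (hτ : τ ∈ Set.Icc (0:ℝ) T) :
    1 ≤ max 1 (Int.toNat ⌈(n:ℝ) * τ / T⌉) ∧ max 1 (Int.toNat ⌈(n:ℝ) * τ / T⌉) ≤ n ∧
      (((max 1 (Int.toNat ⌈(n:ℝ) * τ / T⌉) : ℕ) : ℝ) - 1) * T / n ≤ τ ∧
      τ ≤ ((max 1 (Int.toNat ⌈(n:ℝ) * τ / T⌉) : ℕ) : ℝ) * T / n := by
  have hn0 : (0:ℝ) < n := by exact_mod_cast hn
  set x : ℝ := (n:ℝ) * τ / T with hx
  set j : ℕ := max 1 (Int.toNat ⌈x⌉) with hj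
  have hx0 : 0 ≤ x := by
    apply div_nonneg (mul_nonneg (by positivity) hτ.1) hT.le
  have hxn : x ≤ n := by
    rw [hx, div_le_iff₀ hT]
    nlinarith [hτ.2]
  have hceil0 : 0 ≤ ⌈x⌉ := Int.ceil_nonneg hx0
  have hceilcast : ((Int.toNat ⌈x⌉ : ℕ) : ℝ) = ((⌈x⌉ : ℤ) : ℝ) := by
    exact_mod_cast congrArg (fun z : ℤ => (z : ℝ)) (Int.toNat_of_nonneg hceil0)
  refine ⟨le_max_left _ _, ?_, ?_, ?_⟩
  · apply max_le hn
    rw [← Int.toNat_natCast n]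
    apply Int.toNat_le_toNat
    rw [Int.ceil_le]
    push_cast
    exact hxn
  · rcases max_cases 1 (Int.toNat ⌈x⌉) with ⟨he, _⟩ | ⟨he, _⟩
    · rw [← hj] at he
      rw [he]
      simp only [Nat.cast_one, sub_self, zero_mul, zero_div]
      exact hτ.1
    · rw [← hj] at he
      have hle : (j : ℝ) - 1 ≤ x := by
        rw [he, hceilcast]
        have := Int.ceil_lt_add_one x
        linarith
      have hmul := mul_le_mul_of_nonneg_right hle (le_of_lt (div_pos hT hn0))
      calc ((j : ℝ) - 1) * T / n = ((j : ℝ) - 1) * (T / n) := by ring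
      _ ≤ x * (T / n) := hmul
      _ = τ := by rw [hx]; field_simp
  · have hle : x ≤ (j : ℝ) := by
      have h1 : x ≤ ((⌈x⌉ : ℤ) : ℝ) := Int.le_ceil x
      have h2 : ((⌈x⌉ : ℤ) : ℝ) ≤ (j : ℝ) := by
        rw [← hceilcast]
        exact_mod_cast Nat.le_max_right 1 (Int.toNat ⌈x⌉)
      linarith
    have hmul := mul_le_mul_of_nonneg_right hle (le_of_lt (div_pos hT hn0))
    calc τ = x * (T / n) := by rw [hx]; field_simp
    _ ≤ (j : ℝ) * (T / n) := hmul
    _ = (j : ℝ) * T / n := by ring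



lemma meas1 (r : ℝ) : Measurable fun p : ℝ × ℝ => |p.1 - p.2| ^ r := by measurability

lemma meas3 (r τ : ℝ) : Measurable fun p : ℝ × ℝ => |p.1 - p.2| ^ r - |p.1 - τ| ^ r := by
  measurability

lemma meas2 (r τ : ℝ) : Measurable fun p : ℝ × ℝ => |(|p.1 - p.2| ^ r - |p.1 - τ| ^ r)| :=
  (meas3 r τ).abs

lemma sm_integral (r a b : ℝ) :
    StronglyMeasurable fun s : ℝ => ∫ s' in Set.Ioc a b, |s - s'| ^ r :=
  MeasureTheory.StronglyMeasurable.integral_prod_right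
    (f := fun s s' => |s - s'| ^ r) (meas1 r).stronglyMeasurable

lemma sm_integral2 (r τ a b : ℝ) :
    StronglyMeasurable fun s : ℝ => ∫ s' in Set.Ioc a b, (|s - s'| ^ r - |s - τ| ^ r) :=
  MeasureTheory.StronglyMeasurable.integral_prod_right
    (f := fun s s' => |s - s'| ^ r - |s - τ| ^ r) (meas3 r τ).stronglyMeasurable


end Stmt17Aux

open Filter

/-- `ρ_τ(s) = α_H T |s−τ|^{2H−2}` with `α_H = H(2H−1)`. -/
noncomputable def rhoTau (H T τ s : ℝ) : ℝ := H * (2*H - 1) * T * |s - τ| ^ (2*H - 2)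

/-- `ρ_{n,j}(s) = α_H n ∫_{I_j} |s−s'|^{2H−2} ds'` with `I_j = ((j−1)T/n, jT/n]`. -/
noncomputable def rhoNJ (H T : ℝ) (n j : ℕ) (s : ℝ) : ℝ :=
  H * (2*H - 1) * n *
    ∫ s' in Set.Ioc (((j:ℝ) - 1) * T / n) ((j:ℝ) * T / n), |s - s'| ^ (2*H - 2)

/-- The index `j_n(τ)` with `τ ∈ I_{j_n(τ)}` (and `j_n(0)=1`). -/
noncomputable def jIdx (T : ℝ) (n : ℕ) (τ : ℝ) : ℕ :=
  max 1 (Int.toNat ⌈(n:ℝ) * τ / T⌉)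

/-- (1) `ρ_τ` and `ρ_{n,j}` are bounded in `L¹([0,T])`;
(2) `ρ_{n,j_n(τ)} → ρ_τ` in `L¹([0,T])` uniformly in `τ ∈ [0,T]`. -/
theorem stmt17 (H T : ℝ) (hH : H ∈ Set.Ioo (1/2:ℝ) 1) (hT : 0 < T) :
    (∃ C : ℝ, 0 < C ∧
      (∀ τ ∈ Set.Icc (0:ℝ) T, (∫ s in Set.Icc (0:ℝ) T, |rhoTau H T τ s|) ≤ C) ∧
      (∀ n : ℕ, 1 ≤ n → ∀ j ∈ Finset.Icc 1 n,
        (∫ s in Set.Icc (0:ℝ) T, |rhoNJ H T n j s|) ≤ C)) ∧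
    Tendsto (fun n : ℕ => ⨆ τ : Set.Icc (0:ℝ) T,
        ∫ s in Set.Icc (0:ℝ) T, |rhoNJ H T n (jIdx T n τ) s - rhoTau H T (τ:ℝ) s|)
      atTop (nhds 0) := by
  obtain ⟨hH1, hH2⟩ := hH
  have hr : (-1:ℝ) < 2*H - 2 := by linarith
  have hr0 : 2*H - 2 < 0 := by linarith
  have hp : (0:ℝ) < 2*H - 2 + 1 := by linarith
  have hHpos : (0:ℝ) < H := by linarith
  have h2H1 : (0:ℝ) < 2*H - 1 := by linarith
  have hTp : 0 < T ^ (2*H-1) := Real.rpow_pos_of_pos hT _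
  have hexp : 2*H - 2 + 1 = 2*H - 1 := by ring
  set C : ℝ := H * (2*H - 1) * T * (2 * T ^ (2*H - 1) / (2*H - 1)) with hCdef
  have hC : 0 < C := by
    apply mul_pos (mul_pos (mul_pos hHpos h2H1) hT)
    exact div_pos (mul_pos two_pos hTp) h2H1
  have hker : ∀ s s' : ℝ, (0:ℝ) ≤ |s - s'| ^ (2*H - 2) :=
    fun s s' => Real.rpow_nonneg (abs_nonneg _) _
  -- Part 1, rhoTau
  have hTauB : ∀ τ ∈ Set.Icc (0:ℝ) T, (∫ s in Set.Icc (0:ℝ) T, |rhoTau H T τ s|) ≤ C := by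
    intro τ hτ
    rw [integral_Icc_eq_integral_Ioc]
    have habs : ∀ s : ℝ, |rhoTau H T τ s| = H * (2*H - 1) * T * |s - τ| ^ (2*H - 2) := by
      intro s
      rw [rhoTau]
      exact abs_of_nonneg (mul_nonneg (mul_nonneg (mul_nonneg hHpos.le h2H1.le) hT.le)
        (hker s τ))
    simp only [habs]
    rw [MeasureTheory.integral_const_mul]
    calc H * (2*H - 1) * T * ∫ s in Set.Ioc (0:ℝ) T, |s - τ| ^ (2*H - 2)
        ≤ H * (2*H - 1) * T * (2 * T ^ (2*H - 2 + 1) / (2*H - 2 + 1)) := by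
          apply mul_le_mul_of_nonneg_left (Stmt17Aux.int_in_le hr hr0 hτ)
          exact mul_nonneg (mul_nonneg hHpos.le h2H1.le) hT.le
      _ = C := by rw [hexp]
  -- Part 1, rhoNJ
  have hNJB : ∀ n : ℕ, 1 ≤ n → ∀ j : ℕ, 1 ≤ j → j ≤ n →
      (∫ s in Set.Icc (0:ℝ) T, |rhoNJ H T n j s|) ≤ C := by
    intro n hn j h1j hjn
    have hn0 : (0:ℝ) < n := by exact_mod_cast hn
    have hj1R : (1:ℝ) ≤ j := by exact_mod_cast h1j
    have hjnR : (j:ℝ) ≤ n := by exact_mod_cast hjn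
    set a : ℝ := ((j:ℝ) - 1) * T / n with ha
    set b : ℝ := (j:ℝ) * T / n with hb
    have h0a : 0 ≤ a := by
      rw [ha]; exact div_nonneg (mul_nonneg (by linarith) hT.le) hn0.le
    have hab : a ≤ b := by
      rw [ha, hb]
      gcongr <;> linarith
    have hbT : b ≤ T := by rw [hb, div_le_iff₀ hn0]; nlinarith
    have hsub : Set.Ioc a b ⊆ Set.Icc (0:ℝ) T :=
      fun s hs => ⟨le_trans h0a hs.1.le, le_trans hs.2 hbT⟩
    have hba : b - a = T / n := by rw [ha, hb]; field_simp; ring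
    rw [integral_Icc_eq_integral_Ioc]
    have habs : ∀ s : ℝ, |rhoNJ H T n j s|
        = H * (2*H - 1) * n * ∫ s' in Set.Ioc a b, |s - s'| ^ (2*H - 2) := by
      intro s
      rw [rhoNJ, ← ha, ← hb]
      exact abs_of_nonneg (mul_nonneg (mul_nonneg (mul_nonneg hHpos.le h2H1.le) hn0.le)
        (integral_nonneg (fun s' => hker s s')))
    simp only [habs]
    rw [MeasureTheory.integral_const_mul]
    have hKnn : (0:ℝ) ≤ 2 * T ^ (2*H - 2 + 1) / (2*H - 2 + 1) :=
      le_of_lt (div_pos (mul_pos two_pos (Real.rpow_pos_of_pos hT _)) hp)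
    have hqm : AEStronglyMeasurable (fun s => ∫ s' in Set.Ioc a b, |s - s'| ^ (2*H - 2))
        (volume.restrict (Set.Ioc (0:ℝ) T)) :=
      (Stmt17Aux.sm_integral (2*H - 2) a b).aestronglyMeasurable
    have hswap := Stmt17Aux.swap_bound (T := T) hab hKnn
      (fun s s' => |s - s'| ^ (2*H - 2))
      (Stmt17Aux.meas1 (2*H - 2))
      hker
      (fun s => Stmt17Aux.ion' hr s hab)
      (fun s' _ => Stmt17Aux.ion hr s' hT.le)
      (fun s' hs' => Stmt17Aux.int_in_le hr hr0 (hsub hs'))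
      (fun s => ∫ s' in Set.Ioc a b, |s - s'| ^ (2*H - 2))
      (fun s => integral_nonneg (fun s' => hker s s'))
      hqm
      (fun s => le_refl _)
    calc H * (2*H - 1) * n * ∫ s in Set.Ioc (0:ℝ) T, ∫ s' in Set.Ioc a b, |s - s'| ^ (2*H - 2)
        ≤ H * (2*H - 1) * n * ((b - a) * (2 * T ^ (2*H - 2 + 1) / (2*H - 2 + 1))) := by
          apply mul_le_mul_of_nonneg_left hswap
          exact mul_nonneg (mul_nonneg hHpos.le h2H1.le) hn0.le
      _ = C := by
          rw [hba, hexp, hCdef]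
          field_simp
  -- Part 2 main bound
  have hdiff : ∀ n : ℕ, 1 ≤ n → ∀ τ : ℝ, τ ∈ Set.Icc (0:ℝ) T →
      (∫ s in Set.Icc (0:ℝ) T, |rhoNJ H T n (jIdx T n τ) s - rhoTau H T τ s|)
        ≤ 4 * H * T * (T / n) ^ (2*H - 1) := by
    intro n hn τ hτ
    have hn0 : (0:ℝ) < n := by exact_mod_cast hn
    obtain ⟨h1j, hjn, hlow, hhigh⟩ := Stmt17Aux.jIdx_facts hT hn hτ
    set j : ℕ := jIdx T n τ with hjdef
    have hjeq : j = max 1 (Int.toNat ⌈(n:ℝ) * τ / T⌉) := rfl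
    rw [← hjeq] at h1j hjn hlow hhigh
    have hj1R : (1:ℝ) ≤ j := by exact_mod_cast h1j
    have hjnR : (j:ℝ) ≤ n := by exact_mod_cast hjn
    set a : ℝ := ((j:ℝ) - 1) * T / n with ha
    set b : ℝ := (j:ℝ) * T / n with hb
    have h0a : 0 ≤ a := by
      rw [ha]; exact div_nonneg (mul_nonneg (by linarith) hT.le) hn0.le
    have hab : a ≤ b := by
      rw [ha, hb]
      gcongr <;> linarith
    have hbT : b ≤ T := by rw [hb, div_le_iff₀ hn0]; nlinarith
    have hsub : Set.Ioc a b ⊆ Set.Icc (0:ℝ) T :=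
      fun s hs => ⟨le_trans h0a hs.1.le, le_trans hs.2 hbT⟩
    have hba : b - a = T / n := by rw [ha, hb]; field_simp; ring
    have hclose : ∀ s' ∈ Set.Ioc a b, |s' - τ| ≤ T / n := by
      intro s' hs'
      rw [abs_le]
      constructor
      · have := hs'.1
        linarith [hhigh, hba]
      · have := hs'.2
        linarith [hlow, hba]
    have hpt : ∀ s : ℝ, |rhoNJ H T n j s - rhoTau H T τ s|
        = H * (2*H - 1) * n *
          |∫ s' in Set.Ioc a b, (|s - s'| ^ (2*H - 2) - |s - τ| ^ (2*H - 2))| := by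
      intro s
      have hconst : (∫ _ in Set.Ioc a b, |s - τ| ^ (2*H - 2))
          = (T / n) * |s - τ| ^ (2*H - 2) := by
        rw [setIntegral_const, Real.volume_real_Ioc_of_le hab,
          hba, smul_eq_mul]
      have hsub' : rhoNJ H T n j s - rhoTau H T τ s
          = H * (2*H - 1) * n *
            ∫ s' in Set.Ioc a b, (|s - s'| ^ (2*H - 2) - |s - τ| ^ (2*H - 2)) := by
        rw [rhoNJ, rhoTau, ← ha, ← hb]
        rw [integral_sub (Stmt17Aux.ion' hr s hab)
          (integrableOn_const measure_Ioc_lt_top.ne)]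
        rw [hconst]
        field_simp
      rw [hsub', abs_mul, abs_of_nonneg
        (mul_nonneg (mul_nonneg hHpos.le h2H1.le) hn0.le)]
    rw [integral_Icc_eq_integral_Ioc]
    simp only [hpt]
    rw [MeasureTheory.integral_const_mul]
    have hKnn : (0:ℝ) ≤ 4 * (T/n) ^ (2*H - 2 + 1) / (2*H - 2 + 1) :=
      le_of_lt (div_pos (mul_pos four_pos (Real.rpow_pos_of_pos (div_pos hT hn0) _)) hp)
    have hGm : Measurable (fun p : ℝ × ℝ =>
        |(|p.1 - p.2| ^ (2*H - 2) - |p.1 - τ| ^ (2*H - 2))|) := Stmt17Aux.meas2 (2*H - 2) τ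
    have hsm : StronglyMeasurable (fun s => ∫ s' in Set.Ioc a b,
        (|s - s'| ^ (2*H - 2) - |s - τ| ^ (2*H - 2))) := Stmt17Aux.sm_integral2 (2*H - 2) τ a b
    have hswap := Stmt17Aux.swap_bound (T := T) hab hKnn
      (fun s s' => |(|s - s'| ^ (2*H - 2) - |s - τ| ^ (2*H - 2))|)
      hGm
      (fun s s' => abs_nonneg _)
      (fun s => ((Stmt17Aux.ion' hr s hab).sub
        (integrableOn_const measure_Ioc_lt_top.ne)).abs)
      (fun s' _ => ((Stmt17Aux.ion hr s' hT.le).sub (Stmt17Aux.ion hr τ hT.le)).abs)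
      (fun s' hs' => by
        calc (∫ s in Set.Ioc (0:ℝ) T, |(|s - s'| ^ (2*H - 2) - |s - τ| ^ (2*H - 2))|)
            ≤ 4 * |s' - τ| ^ (2*H - 2 + 1) / (2*H - 2 + 1) :=
              Stmt17Aux.keyB' hr hr0 (hsub hs') hτ
          _ ≤ 4 * (T/n) ^ (2*H - 2 + 1) / (2*H - 2 + 1) := by
              have h5 := Real.rpow_le_rpow (abs_nonneg (s' - τ)) (hclose s' hs') hp.le
              rw [div_le_div_iff₀ hp hp]
              nlinarith [h5])
      (fun s => |∫ s' in Set.Ioc a b, (|s - s'| ^ (2*H - 2) - |s - τ| ^ (2*H - 2))|)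
      (fun s => abs_nonneg _)
      ((hsm.measurable.abs).aestronglyMeasurable)
      (fun s => by
        simpa [Real.norm_eq_abs] using
          norm_integral_le_integral_norm (μ := volume.restrict (Set.Ioc a b))
            (fun s' => |s - s'| ^ (2*H - 2) - |s - τ| ^ (2*H - 2)))
    calc H * (2*H - 1) * n *
          ∫ s in Set.Ioc (0:ℝ) T, |∫ s' in Set.Ioc a b,
            (|s - s'| ^ (2*H - 2) - |s - τ| ^ (2*H - 2))|
        ≤ H * (2*H - 1) * n * ((b - a) * (4 * (T/n) ^ (2*H - 2 + 1) / (2*H - 2 + 1))) := by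
          apply mul_le_mul_of_nonneg_left hswap
          exact mul_nonneg (mul_nonneg hHpos.le h2H1.le) hn0.le
      _ = 4 * H * T * (T / n) ^ (2*H - 1) := by
          rw [hba, hexp]
          field_simp
          ring_nf
          have h' : (-1 + H*2) ≠ 0 := by linarith
          have e : H * (-1 + H*2)⁻¹ * 2 - (-1 + H*2)⁻¹ = (-1 + H*2) * (-1 + H*2)⁻¹ := by ring
          rw [e, mul_inv_cancel₀ h']
  -- Conclusion
  haveI : Nonempty (Set.Icc (0:ℝ) T) := ⟨⟨0, Set.mem_Icc.2 ⟨le_rfl, hT.le⟩⟩⟩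
  refine ⟨⟨C, hC, hTauB, ?_⟩, ?_⟩
  · intro n hn j hj
    rw [Finset.mem_Icc] at hj
    exact hNJB n hn j hj.1 hj.2
  · apply squeeze_zero' (g := fun n : ℕ => 4 * H * T * (T / n) ^ (2*H - 1))
    · filter_upwards [eventually_ge_atTop 1] with n hn
      have hbdd : BddAbove (Set.range fun τ : Set.Icc (0:ℝ) T =>
          ∫ s in Set.Icc (0:ℝ) T, |rhoNJ H T n (jIdx T n τ) s - rhoTau H T (τ:ℝ) s|) := by
        refine ⟨4 * H * T * (T / n) ^ (2*H - 1), ?_⟩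
        rintro y ⟨τ, rfl⟩
        exact hdiff n hn τ τ.2
      exact le_trans (integral_nonneg fun s => abs_nonneg _)
        (le_ciSup hbdd ⟨0, Set.mem_Icc.2 ⟨le_rfl, hT.le⟩⟩)
    · filter_upwards [eventually_ge_atTop 1] with n hn
      exact ciSup_le fun τ => hdiff n hn τ τ.2
    · have h1 : Tendsto (fun n : ℕ => T / (n:ℝ)) atTop (nhds 0) :=
        tendsto_const_div_atTop_nhds_zero_nat T
      have h2 : Tendsto (fun n : ℕ => (T/(n:ℝ)) ^ (2*H - 1)) atTop (nhds 0) := by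
        have hc := (Real.continuousAt_rpow_const 0 (2*H - 1) (Or.inr h2H1.le)).tendsto
        have h3 := hc.comp h1
        simpa [Real.zero_rpow (ne_of_gt h2H1), Function.comp_def] using h3
      simpa using h2.const_mul (4 * H * T)
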